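/- arXiv:1209.1429 — 2 statements merged into one kernel-verified Lean document; each statement's English description precedes it below -/
import Mathlib

section
/- Let ψ be an additive character of ℚ₂ of conductor 1, let n ≥ 1, and let b be a symmetric n × n matrix with entries in ℚ₂. Then ψ(yᵀ b y) = 1 for all y ∈ ℤ₂ⁿ if and only if every off-diagonal entry of b lies in ℤ₂ and every diagonal entry of b lies in 2ℤ₂. (This computes which operators φ(y) ↦ ψ(yᵀby)φ(y) of the Schrödinger model fix the indicator function of ℤ₂ⁿ, and hence determines the long-root and short-root conditions defining the subgroup J.) -/
/-!
Since the residue field of `ℤ₂` is `𝔽₂`, every unit is `≡ 1 mod 2`, so a character of conductor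
`1` takes the value `-1` on all of `ℤ₂ˣ`; hence `ψ (t c) = 1` for all `c ∈ ℤ₂` forces
`t ∈ 2ℤ₂`. Polarising `q(y) = yᵀ b y` gives `ψ (2 yᵀ b z) = 1` for integral `y, z`, which puts
`2 b_ij` in `2ℤ₂`; then `ψ (b_ii) = 1` with `b_ii ∈ ℤ₂` puts `b_ii` in `2ℤ₂`. Conversely
`q(y) = ∑ b_ii y_i² + 2 ∑_{i<j} b_ij y_i y_j ∈ 2ℤ₂` by the ultrametric inequality.
-/
open Finset

section QuadraticSum

variable {ι R : Type*} [Fintype ι] [CommSemiring R] {b : Matrix ι ι R}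

theorem Matrix.sum_sum_mul_single_mul_single [DecidableEq ι] (k l : ι) (a c : R) :
    ∑ i, ∑ j, b i j * (Pi.single k a : ι → R) i * (Pi.single l c : ι → R) j = b k l * a * c := by
  simp [Pi.single_apply, mul_ite, ite_mul, Finset.sum_ite_eq']

theorem Matrix.IsSymm.sum_sum_mul_add_mul_add (hb : b.IsSymm) (y z : ι → R) :
    ∑ i, ∑ j, b i j * (y + z) i * (y + z) j =
      ∑ i, ∑ j, b i j * y i * y j + ∑ i, ∑ j, b i j * z i * z j +
        2 * ∑ i, ∑ j, b i j * y i * z j := by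
  have hcross : ∑ i, ∑ j, b i j * z i * y j = ∑ i, ∑ j, b i j * y i * z j := by
    rw [Finset.sum_comm]
    refine Fintype.sum_congr _ _ fun i => Fintype.sum_congr _ _ fun j => ?_
    rw [hb.apply i j]; ring
  simp only [Pi.add_apply, mul_add, add_mul, Finset.sum_add_distrib, hcross]
  ring

theorem Matrix.IsSymm.sum_sum_mul_mul_eq [LinearOrder ι] [LocallyFiniteOrderTop ι]
    [LocallyFiniteOrderBot ι] (hb : b.IsSymm) (y : ι → R) :
    ∑ i, ∑ j, b i j * y i * y j =
      ∑ i, b i i * y i * y i + 2 * ∑ i, ∑ j ∈ Ioi i, b i j * y i * y j := by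
  have hoff := Finset.sum_sum_Ioi_add_eq_sum_sum_off_diag fun j i => b i j * y i * y j
  have hpair : ∀ i j, b i j * y i * y j + b j i * y j * y i = 2 * (b i j * y i * y j) := by
    intro i j; rw [hb.apply i j]; ring
  simp only [hpair, ← Finset.mul_sum] at hoff
  rw [hoff, ← Finset.sum_add_distrib]
  refine Fintype.sum_congr _ _ fun i => ?_
  rw [← Finset.sum_add_sum_compl {i}, Finset.sum_singleton]

end QuadraticSum

theorem Pi.norm_single_apply_le {ι E : Type*} [DecidableEq ι] [SeminormedAddGroup E] (i k : ι)
    (c : E) : ‖(Pi.single i c : ι → E) k‖ ≤ ‖c‖ := by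
  rw [Pi.single_apply]
  split_ifs <;> simp

namespace Padic

theorem norm_two_eq : ‖(2 : ℚ_[2])‖ = 2⁻¹ := by
  simpa using norm_p (p := 2)

theorem norm_le_half_iff_lt_one (x : ℚ_[2]) : ‖x‖ ≤ 2⁻¹ ↔ ‖x‖ < 1 := by
  simpa using (norm_lt_pow_iff_norm_le_pow_sub_one x 0).symm

theorem norm_sub_one_le_half {x : ℚ_[2]} (hx : ‖x‖ = 1) : ‖x - 1‖ ≤ 2⁻¹ := by
  obtain ⟨n, hn, hmem⟩ := PadicInt.exists_mem_range (⟨x, hx.le⟩ : ℤ_[2])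
  have hlt : ‖x - n‖ < 1 := PadicInt.mem_nonunits.1 hmem
  rw [norm_le_half_iff_lt_one]
  interval_cases n
  · simp [hx] at hlt
  · simpa using hlt

theorem norm_sum_sum_mul_mul_le_half {ι : Type*} [Fintype ι] [LinearOrder ι]
    [LocallyFiniteOrderTop ι] [LocallyFiniteOrderBot ι] {b : Matrix ι ι ℚ_[2]} (hb : b.IsSymm)
    (hoff : ∀ i j, i ≠ j → ‖b i j‖ ≤ 1) (hdiag : ∀ i, ‖b i i‖ ≤ 2⁻¹) {y : ι → ℚ_[2]}
    (hy : ∀ i, ‖y i‖ ≤ 1) : ‖∑ i, ∑ j, b i j * y i * y j‖ ≤ 2⁻¹ := by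
  have hsum {s : Finset ι} {f : ι → ℚ_[2]} (hf : ∀ i ∈ s, ‖f i‖ ≤ 2⁻¹) : ‖∑ i ∈ s, f i‖ ≤ 2⁻¹ :=
    IsUltrametricDist.norm_sum_le_of_forall_le_of_nonneg (by norm_num) hf
  rw [hb.sum_sum_mul_mul_eq]
  refine (nonarchimedean _ _).trans (max_le (hsum fun i _ => ?_) ?_)
  · calc ‖b i i * y i * y i‖ = ‖b i i‖ * ‖y i‖ * ‖y i‖ := by rw [norm_mul, norm_mul]
      _ ≤ 2⁻¹ * 1 * 1 := by gcongr <;> [exact hdiag i; exact hy i; exact hy i]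
      _ = 2⁻¹ := by norm_num
  rw [norm_mul, norm_two_eq]
  refine mul_le_of_le_one_right (by norm_num) ?_
  refine IsUltrametricDist.norm_sum_le_of_forall_le_of_nonneg zero_le_one fun i _ => ?_
  refine IsUltrametricDist.norm_sum_le_of_forall_le_of_nonneg zero_le_one fun j hj => ?_
  rw [norm_mul, norm_mul]
  exact mul_le_one₀ (mul_le_one₀ (hoff i j (Finset.mem_Ioi.1 hj).ne) (norm_nonneg _) (hy i))
    (norm_nonneg _) (hy j)

end Padic

/-- An additive character of `ℚ₂` of conductor `1`. Continuity and `|ψ| = 1` need not be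
recorded: they follow because `ψ` is trivial on the open subgroup `2ℤ₂`. -/
structure IsConductorOneCharacter (ψ : ℚ_[2] → ℂ) : Prop where
  map_add : ∀ x y, ψ (x + y) = ψ x * ψ y
  map_eq_one_of_norm_le_half : ∀ x : ℚ_[2], ‖x‖ ≤ 2⁻¹ → ψ x = 1
  exists_norm_le_one_ne_one : ∃ x : ℚ_[2], ‖x‖ ≤ 1 ∧ ψ x ≠ 1

namespace IsConductorOneCharacter

variable {ψ : ℚ_[2] → ℂ}

theorem map_eq_map_one (hψ : IsConductorOneCharacter ψ) {x : ℚ_[2]} (hx : ‖x‖ = 1) :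
    ψ x = ψ 1 := by
  calc ψ x = ψ (x - 1) * ψ 1 := by rw [← hψ.map_add, sub_add_cancel]
    _ = ψ 1 := by rw [hψ.map_eq_one_of_norm_le_half _ (Padic.norm_sub_one_le_half hx), one_mul]

theorem map_one (hψ : IsConductorOneCharacter ψ) : ψ 1 = -1 := by
  have hsq : ψ 1 * ψ 1 = 1 := by
    rw [← hψ.map_add, one_add_one_eq_two]
    exact hψ.map_eq_one_of_norm_le_half _ Padic.norm_two_eq.le
  obtain ⟨x, hx, hψx⟩ := hψ.exists_norm_le_one_ne_one
  have hx1 : ‖x‖ = 1 := by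
    refine hx.antisymm (not_lt.1 fun hlt => hψx ?_)
    exact hψ.map_eq_one_of_norm_le_half x ((Padic.norm_le_half_iff_lt_one x).2 hlt)
  rw [hψ.map_eq_map_one hx1] at hψx
  exact (mul_self_eq_one_iff.1 hsq).resolve_left hψx

theorem map_eq_one_iff (hψ : IsConductorOneCharacter ψ) {x : ℚ_[2]} (hx : ‖x‖ ≤ 1) :
    ψ x = 1 ↔ ‖x‖ ≤ 2⁻¹ := by
  refine ⟨fun hψx => ?_, hψ.map_eq_one_of_norm_le_half x⟩
  rw [Padic.norm_le_half_iff_lt_one]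
  refine hx.lt_of_ne fun hx1 => ?_
  rw [hψ.map_eq_map_one hx1, hψ.map_one] at hψx
  norm_num at hψx

theorem norm_le_half_of_forall_map_mul_eq_one (hψ : IsConductorOneCharacter ψ) {t : ℚ_[2]}
    (ht : ∀ c : ℚ_[2], ‖c‖ ≤ 1 → ψ (t * c) = 1) : ‖t‖ ≤ 2⁻¹ := by
  by_contra hlarge
  have h1 : 1 ≤ ‖t‖ := not_lt.1 ((Padic.norm_le_half_iff_lt_one t).not.1 hlarge)
  have ht0 : t ≠ 0 := norm_pos_iff.1 (one_pos.trans_le h1)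
  have := ht t⁻¹ (by rw [norm_inv]; exact inv_le_one_of_one_le₀ h1)
  rw [mul_inv_cancel₀ ht0, hψ.map_one] at this
  norm_num at this

variable {ι : Type*} [Fintype ι] {b : Matrix ι ι ℚ_[2]}

theorem map_two_mul_sum_sum_eq_one (hψ : IsConductorOneCharacter ψ) (hb : b.IsSymm)
    (H : ∀ y : ι → ℚ_[2], (∀ i, ‖y i‖ ≤ 1) → ψ (∑ i, ∑ j, b i j * y i * y j) = 1)
    {y z : ι → ℚ_[2]} (hy : ∀ i, ‖y i‖ ≤ 1) (hz : ∀ i, ‖z i‖ ≤ 1) :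
    ψ (2 * ∑ i, ∑ j, b i j * y i * z j) = 1 := by
  have hyz := H (y + z) fun i => (Padic.nonarchimedean _ _).trans (max_le (hy i) (hz i))
  rwa [hb.sum_sum_mul_add_mul_add, hψ.map_add, hψ.map_add, H y hy, H z hz, one_mul, one_mul]
    at hyz

theorem norm_entry_le_one (hψ : IsConductorOneCharacter ψ) (hb : b.IsSymm)
    (H : ∀ y : ι → ℚ_[2], (∀ i, ‖y i‖ ≤ 1) → ψ (∑ i, ∑ j, b i j * y i * y j) = 1) (i j : ι) :
    ‖b i j‖ ≤ 1 := by
  classical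
  have h2b : ‖2 * b i j‖ ≤ 2⁻¹ := hψ.norm_le_half_of_forall_map_mul_eq_one fun c hc => by
    have := hψ.map_two_mul_sum_sum_eq_one hb H (y := Pi.single i 1) (z := Pi.single j c)
      (fun k => (Pi.norm_single_apply_le i k 1).trans_eq norm_one)
      (fun k => (Pi.norm_single_apply_le j k c).trans hc)
    rwa [Matrix.sum_sum_mul_single_mul_single, mul_one, ← mul_assoc] at this
  rw [norm_mul, Padic.norm_two_eq] at h2b
  linarith

theorem norm_diag_le_half (hψ : IsConductorOneCharacter ψ) (hb : b.IsSymm)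
    (H : ∀ y : ι → ℚ_[2], (∀ i, ‖y i‖ ≤ 1) → ψ (∑ i, ∑ j, b i j * y i * y j) = 1) (i : ι) :
    ‖b i i‖ ≤ 2⁻¹ := by
  classical
  have := H (Pi.single i 1) fun k => (Pi.norm_single_apply_le i k 1).trans_eq norm_one
  rw [Matrix.sum_sum_mul_single_mul_single, mul_one, mul_one] at this
  exact (hψ.map_eq_one_iff (hψ.norm_entry_le_one hb H i i)).1 this

end IsConductorOneCharacter

theorem quadratic_character_trivial_iff_general (ψ : ℚ_[2] → ℂ)
    (hhom : ∀ x y : ℚ_[2], ψ (x + y) = ψ x * ψ y)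
    (htriv : ∀ x : ℚ_[2], ‖x‖ ≤ (2 : ℝ)⁻¹ → ψ x = 1)
    (hnontriv : ∃ x : ℚ_[2], ‖x‖ ≤ 1 ∧ ψ x ≠ 1)
    (n : ℕ)
    (b : Matrix (Fin n) (Fin n) ℚ_[2]) (hb : b.IsSymm) :
    (∀ y : Fin n → ℚ_[2], (∀ i, ‖y i‖ ≤ 1) →
        ψ (∑ i, ∑ j, b i j * y i * y j) = 1) ↔
      ((∀ i j, i ≠ j → ‖b i j‖ ≤ 1) ∧ ∀ i, ‖b i i‖ ≤ (2 : ℝ)⁻¹) := by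
  have hψ : IsConductorOneCharacter ψ := ⟨hhom, htriv, hnontriv⟩
  refine ⟨fun H => ⟨fun i j _ => hψ.norm_entry_le_one hb H i j, hψ.norm_diag_le_half hb H⟩, ?_⟩
  rintro ⟨hoff, hdiag⟩ y hy
  exact htriv _ (Padic.norm_sum_sum_mul_mul_le_half hb hoff hdiag hy)

/-- Let `ψ` be an additive character of `ℚ₂` of conductor `1`, `n ≥ 1`, and `b` a
symmetric `n × n` matrix over `ℚ₂`.  Then `ψ(yᵀ b y) = 1` for all `y ∈ ℤ₂ⁿ` if and
only if every off-diagonal entry of `b` lies in `ℤ₂` and every diagonal entry lies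
in `2ℤ₂`.  (This determines which operators `φ(y) ↦ ψ(yᵀby)φ(y)` of the Schrödinger
model fix the indicator function of `ℤ₂ⁿ`, hence the conditions defining `J`.) -/
theorem quadratic_character_trivial_iff (ψ : ℚ_[2] → ℂ)
    (hcont : Continuous ψ)
    (hhom : ∀ x y : ℚ_[2], ψ (x + y) = ψ x * ψ y)
    (hcircle : ∀ x : ℚ_[2], ‖ψ x‖ = 1)
    (htriv : ∀ x : ℚ_[2], ‖x‖ ≤ (2 : ℝ)⁻¹ → ψ x = 1)
    (hnontriv : ∃ x : ℚ_[2], ‖x‖ ≤ 1 ∧ ψ x ≠ 1)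
    (n : ℕ) (hn : 1 ≤ n)
    (b : Matrix (Fin n) (Fin n) ℚ_[2]) (hb : b.IsSymm) :
    (∀ y : Fin n → ℚ_[2], (∀ i, ‖y i‖ ≤ 1) →
        ψ (∑ i, ∑ j, b i j * y i * y j) = 1) ↔
      ((∀ i j, i ≠ j → ‖b i j‖ ≤ 1) ∧ ∀ i, ‖b i i‖ ≤ (2 : ℝ)⁻¹) :=
  quadratic_character_trivial_iff_general ψ hhom htriv hnontriv n b hb
end

section
/- Let G be a profinite group, H an open subgroup, μ the Haar measure on G with μ(H) = 1, χ : H → ℂˣ a continuous homomorphism, and x ∈ G with x ∉ H. Let U and the convolution algebra 𝓗 (with identity χ̇) be as in the Hecke-algebra setup. Assume that every f ∈ 𝓗 vanishes outside H ∪ HxH, and that U possesses a G-invariant subspace W with 0 < dim W < dim U. Set λ = (dim U - dim W) / dim W. Then there exists f ∈ 𝓗, vanishing identically on H and not identically zero (hence supported on the double coset HxH), such that f ⋆ φ = λ·φ for every φ ∈ W, and f satisfies the quadratic relation f ⋆ f = (λ - 1)·f + λ·χ̇ in 𝓗; equivalently (Θ(f) - λ)(Θ(f) + 1) = 0 on U.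 -/
/-!
The character `χ` is trivial on some open normal subgroup `N ≤ H`, since `ℂˣ` has no small
subgroups; hence `G` acts on the finite-dimensional space `U` through the finite group `G/N`, and
by Maschke's theorem `W` has a `G`-equivariant projection `E`. Every `G`-endomorphism `T` of `U`
is left convolution by `T χ̇`. Computing the trace of `E` in the basis of translates of `χ̇` gives
`[G : H] · (E χ̇)(1) = dim W`, so `f = (λ + 1) · E χ̇ - χ̇` vanishes on `H`. As `E² = E`, the
operator `Θ(f) = (λ + 1) E - 1` is `λ` on `W` and satisfies `Θ(f)² = (λ - 1) Θ(f) + λ`; and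
`f ≠ 0`, for otherwise `(λ + 1) E = 1` would force `W = U`.
-/

open MeasureTheory

/-- Convolution of functions on `G` with respect to the measure `μ`:
`(f ⋆ f')(y) = ∫_G f(x) f'(x⁻¹ y) dμ(x)`. -/
noncomputable def heckeConv {G : Type*} [Group G] [MeasurableSpace G]
    (μ : Measure G) (f f' : G → ℂ) : G → ℂ :=
  fun y => ∫ x, f x * f' (x⁻¹ * y) ∂μ

/-- The χ-spherical Hecke algebra (as a set of functions):
locally constant `f : G → ℂ` with `f(h₁ x h₂) = χ(h₁) f(x) χ(h₂)` for `h₁, h₂ ∈ H`. -/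
def heckeSet {G : Type*} [Group G] [TopologicalSpace G]
    (H : Subgroup G) (χ : H →* ℂˣ) : Set (G → ℂ) :=
  {f | IsLocallyConstant f ∧
    ∀ (h₁ h₂ : H) (x : G), f (↑h₁ * x * ↑h₂) = (χ h₁ : ℂ) * f x * (χ h₂ : ℂ)}

/-- The space `U = { φ : G → ℂ | φ(hx) = χ(h) φ(x) for h ∈ H }` of the induced
representation, as a `ℂ`-subspace of `G → ℂ`; `G` acts on it by right translation. -/
noncomputable def inducedSubspace {G : Type*} [Group G]
    (H : Subgroup G) (χ : H →* ℂˣ) : Submodule ℂ (G → ℂ) where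
  carrier := {φ | ∀ (h : H) (x : G), φ (↑h * x) = (χ h : ℂ) * φ x}
  add_mem' := by
    intro a b ha hb h x
    simp only [Set.mem_setOf_eq] at *
    simp [ha h x, hb h x]; ring
  zero_mem' := by intro h x; simp
  smul_mem' := by
    intro c a ha h x
    simp only [Set.mem_setOf_eq] at *
    simp [ha h x]; ring

open scoped Classical in
/-- The extension `χ̇` of `χ` by `0` to all of `G`. -/
noncomputable def chiDot {G : Type*} [Group G]
    (H : Subgroup G) (χ : H →* ℂˣ) : G → ℂ :=
  fun x => if hx : x ∈ H then (χ ⟨x, hx⟩ : ℂ) else 0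

theorem Complex.eq_one_of_forall_norm_pow_sub_one_lt {z : ℂ}
    (h : ∀ n : ℕ, ‖z ^ n - 1‖ < 1 / 4) : z = 1 := by
  -- Squaring multiplies the distance to `1` by `‖w + 1‖ ≥ 7/4` as long as it stays below `1/4`.
  have growth : ∀ n : ℕ, (7 / 4 : ℝ) ^ n * ‖z - 1‖ ≤ ‖z ^ 2 ^ n - 1‖ := by
    intro n
    induction n with
    | zero => simp
    | succ n ih =>
      set w := z ^ 2 ^ n
      have hsq : z ^ 2 ^ (n + 1) - 1 = (w - 1) * (w + 1) := by rw [pow_succ, pow_mul]; ring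
      have hw : ‖w - 1‖ < 1 / 4 := h _
      have hw1 : (7 / 4 : ℝ) ≤ ‖w + 1‖ := by
        have := norm_sub_le (w + 1) (w - 1)
        rw [show w + 1 - (w - 1) = 2 by ring, Complex.norm_ofNat] at this
        linarith
      calc (7 / 4 : ℝ) ^ (n + 1) * ‖z - 1‖ = 7 / 4 * ((7 / 4) ^ n * ‖z - 1‖) := by ring
        _ ≤ ‖w + 1‖ * ‖w - 1‖ := by gcongr
        _ = ‖z ^ 2 ^ (n + 1) - 1‖ := by rw [hsq, norm_mul, mul_comm]
  by_contra hz
  have hpos : 0 < ‖z - 1‖ := norm_pos_iff.2 (sub_ne_zero.2 hz)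
  obtain ⟨n, hn⟩ := pow_unbounded_of_one_lt (1 / 4 / ‖z - 1‖) (by norm_num : (1 : ℝ) < 7 / 4)
  have := (div_lt_iff₀ hpos).1 hn
  linarith [growth n, h (2 ^ n)]

theorem exists_openNormalSubgroup_le_map_ker {G : Type*} [Group G] [TopologicalSpace G]
    [IsTopologicalGroup G] [CompactSpace G] [TotallyDisconnectedSpace G]
    {H : Subgroup G} (hH : IsOpen (H : Set G)) {χ : H →* ℂˣ}
    (hχ : Continuous fun h : H => (χ h : ℂ)) :
    ∃ N : OpenNormalSubgroup G, (N : Subgroup G) ≤ χ.ker.map H.subtype := by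
  set S : Set H := (fun h : H => (χ h : ℂ)) ⁻¹' Metric.ball 1 (1 / 4)
  obtain ⟨N, hNS⟩ := ProfiniteGrp.exist_openNormalSubgroup_sub_open_nhds_of_one
    (hH.isOpenMap_subtype_val S (Metric.isOpen_ball.preimage hχ)) ⟨1, by simp [S], rfl⟩
  refine ⟨N, fun ν hν => ?_⟩
  obtain ⟨h, -, rfl⟩ := hNS hν
  refine ⟨h, ?_, rfl⟩
  rw [SetLike.mem_coe, MonoidHom.mem_ker, Units.ext_iff]
  refine Complex.eq_one_of_forall_norm_pow_sub_one_lt fun n => ?_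
  obtain ⟨h', hh'S, hh'⟩ := hNS (pow_mem hν n)
  obtain rfl : h' = h ^ n := Subtype.ext hh'
  simpa [S, dist_eq_norm] using hh'S

theorem Representation.exists_isProj_commute {k Γ V : Type*} [Field k] [Group Γ] [Finite Γ]
    [NeZero (Nat.card Γ : k)] [AddCommGroup V] [Module k V] {ρ : Representation k Γ V}
    (W : Subrepresentation ρ) :
    ∃ E : Module.End k V, LinearMap.IsProj W.toSubmodule E ∧ ∀ g, Commute E (ρ g) := by
  obtain ⟨W', hW'⟩ := exists_isCompl W
  have hc : IsCompl W.toSubmodule W'.toSubmodule :=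
    ⟨disjoint_iff.2 (congr_arg Subrepresentation.toSubmodule hW'.inf_eq_bot),
      codisjoint_iff.2 (congr_arg Subrepresentation.toSubmodule hW'.sup_eq_top)⟩
  have hidem := Submodule.isIdempotentElem_projection hc
  refine ⟨W.toSubmodule.projection W'.toSubmodule hc, ?_, fun g => ?_⟩
  · simpa [Submodule.range_projection] using
      (LinearMap.isProj_range_iff_isIdempotentElem _).2 hidem
  · rw [LinearMap.IsIdempotentElem.commute_iff hidem, Submodule.range_projection,
      Submodule.ker_projection, Module.End.mem_invtSubmodule, Module.End.mem_invtSubmodule]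
    exact ⟨fun v hv => W.apply_mem_toSubmodule g hv, fun v hv => W'.apply_mem_toSubmodule g hv⟩

theorem LinearMap.IsProj.eq_top_of_smul_sub_one_eq_zero {R M : Type*} [CommRing R]
    [AddCommGroup M] [Module R M] {W : Submodule R M} {E : Module.End R M}
    (hE : LinearMap.IsProj W E) {c : R} (hc : c • E - 1 = 0) : W = ⊤ :=
  eq_top_iff.2 fun v _ => by
    have hv : c • E v - v = 0 := LinearMap.congr_fun hc v
    rw [sub_eq_zero, ← map_smul] at hv
    exact hv ▸ hE.map_mem _

theorem LinearMap.IsProj.smul_sub_one_apply_apply {R M : Type*} [CommRing R] [AddCommGroup M]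
    [Module R M] {W : Submodule R M} {E : Module.End R M} (hE : LinearMap.IsProj W E) (c : R)
    (v : M) : (c • E - 1) ((c • E - 1) v) = (c - 2) • (c • E - 1) v + (c - 1) • v := by
  have hEE : E (E v) = E v := hE.map_id _ (hE.map_mem v)
  simp only [LinearMap.sub_apply, LinearMap.smul_apply, Module.End.one_apply, map_sub, map_smul,
    hEE]
  module

theorem Commute.smul_sub_one_left {R M : Type*} [CommRing R] [AddCommGroup M] [Module R M]
    {E A : Module.End R M} (h : Commute E A) (c : R) : Commute (c • E - 1) A :=
  (h.smul_left c).sub_left (.one_left A)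

section Induced

variable {G : Type*} [Group G] {H : Subgroup G} {χ : H →* ℂˣ}

theorem chiDot_of_mem {x : G} (hx : x ∈ H) : chiDot H χ x = χ ⟨x, hx⟩ :=
  dif_pos hx

theorem chiDot_of_notMem {x : G} (hx : x ∉ H) : chiDot H χ x = 0 :=
  dif_neg hx

theorem chiDot_coe (h : H) : chiDot H χ h = χ h :=
  chiDot_of_mem h.2

theorem chiDot_one : chiDot H χ 1 = 1 := by
  simpa using chiDot_coe (χ := χ) 1

theorem chiDot_coe_mul (h : H) (x : G) : chiDot H χ (h * x) = χ h * chiDot H χ x := by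
  by_cases hx : x ∈ H
  · rw [chiDot_of_mem hx, chiDot_of_mem (H.mul_mem h.2 hx)]
    exact congr_arg Units.val (map_mul χ h ⟨x, hx⟩)
  · rw [chiDot_of_notMem hx, chiDot_of_notMem (mt (H.mul_mem_cancel_left h.2).1 hx), mul_zero]

theorem chiDot_mul_coe (x : G) (h : H) : chiDot H χ (x * h) = chiDot H χ x * χ h := by
  by_cases hx : x ∈ H
  · rw [chiDot_of_mem hx, chiDot_of_mem (H.mul_mem hx h.2)]
    exact congr_arg Units.val (map_mul χ ⟨x, hx⟩ h)
  · rw [chiDot_of_notMem hx, chiDot_of_notMem (mt (H.mul_mem_cancel_right h.2).1 hx), zero_mul]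

theorem chiDot_inv_mul_eq_zero {a b : G} (hab : (a : G ⧸ H) ≠ b) : chiDot H χ (a⁻¹ * b) = 0 :=
  chiDot_of_notMem fun hmem => hab (QuotientGroup.eq.2 hmem)

theorem chiDot_out_inv_mul_out [DecidableEq (G ⧸ H)] (q q' : G ⧸ H) :
    chiDot H χ (q.out⁻¹ * q'.out) = (Pi.single q' 1 : G ⧸ H → ℂ) q := by
  obtain rfl | hne := eq_or_ne q q'
  · simp [chiDot_one]
  · rw [chiDot_inv_mul_eq_zero (by simpa using hne), Pi.single_eq_of_ne hne]

variable (H χ) in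
noncomputable def inducedChiDot : inducedSubspace H χ :=
  ⟨chiDot H χ, chiDot_coe_mul⟩

@[simp]
theorem coe_inducedChiDot : (inducedChiDot H χ : G → ℂ) = chiDot H χ :=
  rfl

variable (H χ) in
noncomputable def inducedRep : Representation ℂ G (inducedSubspace H χ) where
  toFun g :=
    { toFun φ := ⟨fun x => (φ : G → ℂ) (x * g), fun h x => by simpa [mul_assoc] using φ.2 h (x * g)⟩
      map_add' _ _ := rfl
      map_smul' _ _ := rfl }
  map_one' := by ext; simp
  map_mul' _ _ := by ext; simp [mul_assoc]

@[simp]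
theorem inducedRep_apply (g : G) (φ : inducedSubspace H χ) (x : G) :
    (inducedRep H χ g φ : G → ℂ) x = (φ : G → ℂ) (x * g) :=
  rfl

theorem inducedRep_coe_inducedChiDot (h : H) :
    inducedRep H χ h (inducedChiDot H χ) = (χ h : ℂ) • inducedChiDot H χ := by
  ext x
  simp [chiDot_mul_coe, mul_comm]

theorem apply_inducedChiDot_mul_coe {T : Module.End ℂ (inducedSubspace H χ)}
    (hT : ∀ g, Commute T (inducedRep H χ g)) (x : G) (h : H) :
    (T (inducedChiDot H χ) : G → ℂ) (x * h) = (T (inducedChiDot H χ) : G → ℂ) x * χ h := by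
  have := congr_arg (fun φ : inducedSubspace H χ => (φ : G → ℂ) x)
    (LinearMap.congr_fun (hT h).eq (inducedChiDot H χ))
  simpa [inducedRep_coe_inducedChiDot, mul_comm] using this.symm

theorem apply_inducedChiDot_eq_zero_of_mem {T : Module.End ℂ (inducedSubspace H χ)}
    (hT : ∀ g, Commute T (inducedRep H χ g)) (h1 : (T (inducedChiDot H χ) : G → ℂ) 1 = 0)
    {y : G} (hy : y ∈ H) : (T (inducedChiDot H χ) : G → ℂ) y = 0 := by
  lift y to H using hy
  rw [← one_mul (y : G), apply_inducedChiDot_mul_coe hT, h1, zero_mul]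

theorem inducedRep_eq_one_of_mem {N : Subgroup G} [N.Normal] (hN : N ≤ χ.ker.map H.subtype)
    {ν : G} (hν : ν ∈ N) : inducedRep H χ ν = 1 := by
  ext φ x
  obtain ⟨h, hh, hνx⟩ := hN (Subgroup.Normal.conj_mem ‹_› ν hν x)
  rw [SetLike.mem_coe, MonoidHom.mem_ker] at hh
  have hhx : (h : G) * x = x * ν := by rw [← H.subtype_apply, hνx, inv_mul_cancel_right]
  simpa [hhx, hh] using φ.2 h x

theorem isLocallyConstant_of_mem_inducedSubspace [TopologicalSpace G] [ContinuousMul G]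
    {N : Subgroup G} [N.Normal] (hNopen : IsOpen (N : Set G)) (hN : N ≤ χ.ker.map H.subtype)
    {φ : G → ℂ} (hφ : φ ∈ inducedSubspace H χ) : IsLocallyConstant φ := by
  refine (IsLocallyConstant.iff_exists_open φ).2 fun x =>
    ⟨(x⁻¹ * ·) ⁻¹' N, hNopen.preimage (continuous_const_mul _), by simp, ?_⟩
  intro y hy
  have := congr_arg (fun ψ : inducedSubspace H χ => (ψ : G → ℂ) x)
    (LinearMap.congr_fun (inducedRep_eq_one_of_mem hN hy) ⟨φ, hφ⟩)
  simpa using this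

theorem coe_apply_inducedChiDot_mem_heckeSet [TopologicalSpace G] [ContinuousMul G]
    {N : Subgroup G} [N.Normal] (hNopen : IsOpen (N : Set G)) (hN : N ≤ χ.ker.map H.subtype)
    {T : Module.End ℂ (inducedSubspace H χ)} (hT : ∀ g, Commute T (inducedRep H χ g)) :
    (T (inducedChiDot H χ) : G → ℂ) ∈ heckeSet H χ :=
  ⟨isLocallyConstant_of_mem_inducedSubspace hNopen hN (T _).2, fun h₁ h₂ x => by
    rw [apply_inducedChiDot_mul_coe hT, (T _).2 h₁ x]⟩

theorem exists_isProj_commute_inducedRep {N : Subgroup G} [N.Normal] [Finite (G ⧸ N)]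
    (hN : N ≤ χ.ker.map H.subtype) (W : Submodule ℂ (inducedSubspace H χ))
    (hW : ∀ g, ∀ φ ∈ W, inducedRep H χ g φ ∈ W) :
    ∃ E : Module.End ℂ (inducedSubspace H χ),
      LinearMap.IsProj W E ∧ ∀ g, Commute E (inducedRep H χ g) := by
  let ρ : Representation ℂ (G ⧸ N) (inducedSubspace H χ) :=
    QuotientGroup.lift N (inducedRep H χ) fun _ hν => inducedRep_eq_one_of_mem hN hν
  obtain ⟨E, hE, hEρ⟩ := Representation.exists_isProj_commute (ρ := ρ)
    ⟨W, fun q => QuotientGroup.induction_on q fun g _ hφ => hW g _ hφ⟩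
  exact ⟨E, hE, fun g => hEρ g⟩

theorem heckeConv_comp_mul_right [MeasurableSpace G] (μ : Measure G) (f φ : G → ℂ) (g y : G) :
    heckeConv μ f (fun x => φ (x * g)) y = heckeConv μ f φ (y * g) := by
  simp [heckeConv, mul_assoc]

section Finite

variable [Fintype (G ⧸ H)]

theorem sum_apply_out_inv_mul_chiDot {φ : G → ℂ} (hφ : φ ∈ inducedSubspace H χ) (x : G) :
    ∑ q : G ⧸ H, φ q.out⁻¹ * chiDot H χ (x * q.out) = φ x := by
  rw [Fintype.sum_eq_single (QuotientGroup.mk x⁻¹ : G ⧸ H) fun q hq => by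
    rw [← inv_inv x, chiDot_inv_mul_eq_zero (by rw [QuotientGroup.out_eq']; exact hq.symm),
      mul_zero]]
  obtain ⟨h, hh⟩ := QuotientGroup.mk_out_eq_mul H x⁻¹
  rw [hh, mul_inv_cancel_left, chiDot_coe, mul_inv_rev, inv_inv, ← Subgroup.coe_inv, hφ, map_inv,
    Units.val_inv_eq_inv_val, mul_right_comm, inv_mul_cancel₀ (Units.ne_zero _), one_mul]

variable (H χ) in
noncomputable def inducedBasis : Module.Basis (G ⧸ H) ℂ (inducedSubspace H χ) :=
  .ofEquivFun <| LinearEquiv.ofLinearMap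
    { toFun φ q := (φ : G → ℂ) q.out⁻¹
      map_add' _ _ := rfl
      map_smul' _ _ := rfl }
    (Fintype.linearCombination ℂ fun q => inducedRep H χ q.out (inducedChiDot H χ))
    (by
      classical
      ext c q
      simp [Fintype.linearCombination_apply, chiDot_out_inv_mul_out])
    (by
      ext φ x
      simpa [Fintype.linearCombination_apply] using sum_apply_out_inv_mul_chiDot φ.2 x)

theorem inducedBasis_repr_apply (φ : inducedSubspace H χ) (q : G ⧸ H) :
    (inducedBasis H χ).repr φ q = (φ : G → ℂ) q.out⁻¹ :=
  rfl

theorem inducedBasis_apply (q : G ⧸ H) :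
    inducedBasis H χ q = inducedRep H χ q.out (inducedChiDot H χ) := by
  classical
  simp [inducedBasis, Module.Basis.coe_ofEquivFun, Fintype.linearCombination_apply_single]

theorem eq_zero_of_apply_inducedChiDot_eq_zero {T : Module.End ℂ (inducedSubspace H χ)}
    (hT : ∀ g, Commute T (inducedRep H χ g)) (h0 : T (inducedChiDot H χ) = 0) : T = 0 :=
  (inducedBasis H χ).ext fun q => by
    rw [inducedBasis_apply, ← Module.End.mul_apply, (hT _).eq, Module.End.mul_apply, h0, map_zero,
      LinearMap.zero_apply]

theorem finrank_inducedSubspace : Module.finrank ℂ (inducedSubspace H χ) = Fintype.card (G ⧸ H) :=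
  Module.finrank_eq_card_basis (inducedBasis H χ)

theorem trace_eq_card_mul_apply_one {T : Module.End ℂ (inducedSubspace H χ)}
    (hT : ∀ g, Commute T (inducedRep H χ g)) :
    LinearMap.trace ℂ _ T = Fintype.card (G ⧸ H) * (T (inducedChiDot H χ) : G → ℂ) 1 := by
  classical
  have hdiag : ∀ q, (LinearMap.toMatrix (inducedBasis H χ) (inducedBasis H χ) T).diag q =
      (T (inducedChiDot H χ) : G → ℂ) 1 := fun q => by
    rw [Matrix.diag_apply, LinearMap.toMatrix_apply, inducedBasis_repr_apply, inducedBasis_apply,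
      ← Module.End.mul_apply, (hT _).eq, Module.End.mul_apply, inducedRep_apply, inv_mul_cancel]
  rw [LinearMap.trace_eq_matrix_trace ℂ (inducedBasis H χ), Matrix.trace,
    Finset.sum_congr rfl fun q _ => hdiag q]
  simp

instance : FiniteDimensional ℂ (inducedSubspace H χ) :=
  .of_basis (inducedBasis H χ)

theorem apply_inducedChiDot_one_of_isProj {W : Submodule ℂ (inducedSubspace H χ)}
    {E : Module.End ℂ (inducedSubspace H χ)} (hE : LinearMap.IsProj W E)
    (hEρ : ∀ g, Commute E (inducedRep H χ g)) :
    (E (inducedChiDot H χ) : G → ℂ) 1 =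
      Module.finrank ℂ W / Module.finrank ℂ (inducedSubspace H χ) := by
  have := Module.Free.of_divisionRing ℂ W
  have := Module.Free.of_divisionRing ℂ (LinearMap.ker E)
  rw [finrank_inducedSubspace, eq_div_iff (Nat.cast_ne_zero.2 Fintype.card_ne_zero), mul_comm,
    ← trace_eq_card_mul_apply_one hEρ, hE.trace]

variable [MeasurableSpace G] [TopologicalSpace G] [IsTopologicalGroup G] [BorelSpace G]
  {μ : Measure G} [μ.IsMulLeftInvariant]

theorem integral_eq_sum_out (hH : IsOpen (H : Set G)) (hμH : μ H = 1) {F : G → ℂ}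
    (hF : ∀ x, ∀ h ∈ H, F (x * h) = F x) : ∫ x, F x ∂μ = ∑ q : G ⧸ H, F q.out := by
  set coset : G ⧸ H → Set G := fun q => (q.out⁻¹ * ·) ⁻¹' H
  have mem_coset {q : G ⧸ H} {x : G} : x ∈ coset q ↔ q = x :=
    QuotientGroup.eq.symm.trans (by rw [QuotientGroup.out_eq'])
  have hmeas q : MeasurableSet (coset q) := (hH.preimage (continuous_const_mul _)).measurableSet
  have hconst q : Set.EqOn (fun _ => F q.out) F (coset q) := fun x hx => by
    simpa using (hF q.out _ hx).symm
  have hvol q : μ.real (coset q) = 1 := by simp [Measure.real, coset, measure_preimage_mul, hμH]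
  have hunion : (⋃ q, coset q) = Set.univ :=
    Set.eq_univ_of_forall fun x => Set.mem_iUnion.2 ⟨x, mem_coset.2 rfl⟩
  have hdisj : Pairwise (Function.onFun Disjoint coset) := fun q q' hne =>
    Set.disjoint_left.2 fun x hx hx' => hne ((mem_coset.1 hx).trans (mem_coset.1 hx').symm)
  rw [← setIntegral_univ, ← hunion, integral_iUnion_fintype hmeas hdisj fun q =>
    (integrableOn_const (by simp [coset, measure_preimage_mul, hμH])).congr_fun (hconst q)
      (hmeas q)]
  refine Finset.sum_congr rfl fun q _ => ?_
  rw [← setIntegral_congr_fun (hmeas q) (hconst q), setIntegral_const, hvol, one_smul]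

theorem heckeConv_eq_sum (hH : IsOpen (H : Set G)) (hμH : μ H = 1) {f φ : G → ℂ}
    (hf : ∀ x (h : H), f (x * h) = f x * χ h) (hφ : φ ∈ inducedSubspace H χ) (y : G) :
    heckeConv μ f φ y = ∑ q : G ⧸ H, f q.out * φ (q.out⁻¹ * y) := by
  refine integral_eq_sum_out hH hμH fun x h hh => ?_
  have hφh : φ (h⁻¹ * (x⁻¹ * y)) = (χ ⟨h, hh⟩)⁻¹ * φ (x⁻¹ * y) := by
    simpa using hφ (⟨h, hh⟩ : H)⁻¹ (x⁻¹ * y)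
  rw [hf x ⟨h, hh⟩, mul_inv_rev, mul_assoc h⁻¹, hφh, ← mul_assoc, mul_assoc (f x),
    Units.mul_inv, mul_one]

theorem heckeConv_chiDot (hH : IsOpen (H : Set G)) (hμH : μ H = 1) {f : G → ℂ}
    (hf : ∀ x (h : H), f (x * h) = f x * χ h) : heckeConv μ f (chiDot H χ) = f := by
  funext y
  rw [heckeConv_eq_sum hH hμH hf chiDot_coe_mul, Fintype.sum_eq_single (y : G ⧸ H) fun q hq => by
    rw [chiDot_inv_mul_eq_zero (by rwa [QuotientGroup.out_eq']), mul_zero]]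
  obtain ⟨h, hh⟩ := QuotientGroup.mk_out_eq_mul H y
  rw [hh, mul_inv_rev, inv_mul_cancel_right, ← Subgroup.coe_inv, chiDot_coe, ← hf]
  simp

theorem heckeConv_apply_inducedChiDot (hH : IsOpen (H : Set G)) (hμH : μ H = 1)
    {T : Module.End ℂ (inducedSubspace H χ)} (hT : ∀ g, Commute T (inducedRep H χ g))
    {φ : G → ℂ} (hφ : φ ∈ inducedSubspace H χ) :
    heckeConv μ (T (inducedChiDot H χ)) φ = T ⟨φ, hφ⟩ := by
  have hf := apply_inducedChiDot_mul_coe hT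
  let L : inducedSubspace H χ →ₗ[ℂ] G → ℂ :=
    { toFun ψ := heckeConv μ (T (inducedChiDot H χ)) ψ
      map_add' ψ ψ' := funext fun y => by
        rw [Pi.add_apply, heckeConv_eq_sum hH hμH hf (ψ + ψ').2, heckeConv_eq_sum hH hμH hf ψ.2,
          heckeConv_eq_sum hH hμH hf ψ'.2, ← Finset.sum_add_distrib]
        simp [mul_add]
      map_smul' c ψ := funext fun y => by
        rw [Pi.smul_apply, heckeConv_eq_sum hH hμH hf (c • ψ).2, heckeConv_eq_sum hH hμH hf ψ.2,
          smul_eq_mul, Finset.mul_sum]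
        simp [mul_left_comm] }
  have hL : L = (inducedSubspace H χ).subtype ∘ₗ T :=
    (inducedBasis H χ).ext fun q => funext fun y => by
      rw [LinearMap.comp_apply, Submodule.subtype_apply, inducedBasis_apply,
        ← Module.End.mul_apply, (hT _).eq, Module.End.mul_apply, inducedRep_apply]
      exact (heckeConv_comp_mul_right μ _ _ _ _).trans <| by
        rw [coe_inducedChiDot, heckeConv_chiDot hH hμH hf]
  exact congr_arg (fun F => F ⟨φ, hφ⟩) hL

theorem heckeConv_smul_sub_one_of_mem (hH : IsOpen (H : Set G)) (hμH : μ H = 1)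
    {W : Submodule ℂ (inducedSubspace H χ)} {E : Module.End ℂ (inducedSubspace H χ)}
    (hE : LinearMap.IsProj W E) (hEρ : ∀ g, Commute E (inducedRep H χ g)) (c : ℂ)
    {φ : inducedSubspace H χ} (hφ : φ ∈ W) :
    heckeConv μ ((c • E - 1) (inducedChiDot H χ) : G → ℂ) φ = (c - 1) • (φ : G → ℂ) := by
  rw [heckeConv_apply_inducedChiDot hH hμH (fun g => (hEρ g).smul_sub_one_left c) φ.2]
  simp [hE.map_id φ hφ, sub_smul]

theorem heckeConv_smul_sub_one_self (hH : IsOpen (H : Set G)) (hμH : μ H = 1)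
    {W : Submodule ℂ (inducedSubspace H χ)} {E : Module.End ℂ (inducedSubspace H χ)}
    (hE : LinearMap.IsProj W E) (hEρ : ∀ g, Commute E (inducedRep H χ g)) (c : ℂ) :
    heckeConv μ ((c • E - 1) (inducedChiDot H χ) : G → ℂ) ((c • E - 1) (inducedChiDot H χ)) =
      (c - 2) • ((c • E - 1) (inducedChiDot H χ) : G → ℂ) + (c - 1) • chiDot H χ := by
  rw [heckeConv_apply_inducedChiDot hH hμH (fun g => (hEρ g).smul_sub_one_left c)
    (Submodule.coe_mem _), hE.smul_sub_one_apply_apply]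
  rfl

end Finite

end Induced

theorem hecke_operator_quadratic_relation_general
    {G : Type*} [Group G] [TopologicalSpace G] [IsTopologicalGroup G]
    [CompactSpace G] [TotallyDisconnectedSpace G]
    [MeasurableSpace G] [BorelSpace G]
    (μ : Measure G) [μ.IsHaarMeasure]
    (H : Subgroup G) (hHopen : IsOpen (H : Set G)) (hμH : μ (H : Set G) = 1)
    (χ : H →* ℂˣ) (hχ : Continuous fun h : H => (χ h : ℂ))
    (W : Submodule ℂ (G → ℂ)) (hWU : W ≤ inducedSubspace H χ)
    (hWinv : ∀ φ ∈ W, ∀ g : G, (fun x => φ (x * g)) ∈ W)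
    (hW0 : 0 < Module.finrank ℂ W)
    (hWU' : Module.finrank ℂ W < Module.finrank ℂ (inducedSubspace H χ))
    (lam : ℂ)
    (hlam : lam = ((Module.finrank ℂ (inducedSubspace H χ) : ℂ) -
        (Module.finrank ℂ W : ℂ)) / (Module.finrank ℂ W : ℂ)) :
    ∃ f ∈ heckeSet H χ,
      (∀ y ∈ H, f y = 0) ∧
      f ≠ 0 ∧
      (∀ φ ∈ W, ∀ y : G, heckeConv μ f φ y = lam * φ y) ∧
      (∀ y : G, heckeConv μ f f y = (lam - 1) * f y + lam * chiDot H χ y) := by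
  have : Fintype (G ⧸ H) := @Fintype.ofFinite _ (Subgroup.quotient_finite_of_isOpen H hHopen)
  obtain ⟨N, hN⟩ := exists_openNormalSubgroup_le_map_ker hHopen hχ
  have := Subgroup.quotient_finite_of_isOpen _ N.toOpenSubgroup.isOpen
  set W₀ := W.comap (inducedSubspace H χ).subtype
  have hW₀ : Module.finrank ℂ W₀ = Module.finrank ℂ W :=
    (Submodule.comapSubtypeEquivOfLe hWU).finrank_eq
  obtain ⟨E, hE, hEρ⟩ := exists_isProj_commute_inducedRep hN W₀ fun g φ hφ => hWinv φ hφ g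
  have hTρ g := (hEρ g).smul_sub_one_left (lam + 1)
  have hT1 : (((lam + 1) • E - 1) (inducedChiDot H χ) : G → ℂ) 1 = 0 := by
    have hw : (Module.finrank ℂ W : ℂ) ≠ 0 := by exact_mod_cast hW0.ne'
    have hn : (Module.finrank ℂ (inducedSubspace H χ) : ℂ) ≠ 0 := by
      exact_mod_cast (hW0.trans hWU').ne'
    simp only [hlam, LinearMap.sub_apply, LinearMap.smul_apply, Module.End.one_apply,
      AddSubgroupClass.coe_sub, SetLike.val_smul, coe_inducedChiDot, Pi.sub_apply, Pi.smul_apply,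
      apply_inducedChiDot_one_of_isProj hE hEρ, hW₀, smul_eq_mul, chiDot_one]
    field_simp
    ring
  refine ⟨_, coe_apply_inducedChiDot_mem_heckeSet N.toOpenSubgroup.isOpen hN hTρ,
    fun y => apply_inducedChiDot_eq_zero_of_mem hTρ hT1, fun hf => ?_, fun φ hφ y => ?_,
    fun y => ?_⟩
  · have hT0 := eq_zero_of_apply_inducedChiDot_eq_zero hTρ (Subtype.ext hf)
    have := congr_arg (fun S : Submodule ℂ _ => Module.finrank ℂ S)
      (hE.eq_top_of_smul_sub_one_eq_zero hT0)
    simp only [hW₀, finrank_top] at this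
    exact hWU'.ne this
  · simpa using congr_fun (heckeConv_smul_sub_one_of_mem hHopen hμH hE hEρ (lam + 1)
      (φ := ⟨φ, hWU hφ⟩) hφ) y
  · have := congr_fun (heckeConv_smul_sub_one_self hHopen hμH hE hEρ (lam + 1)) y
    simp only [Pi.add_apply, Pi.smul_apply, smul_eq_mul] at this
    linear_combination this

/-- Let `G` be a profinite group, `H` an open subgroup, `μ` the Haar measure with
`μ(H) = 1`, `χ : H → ℂˣ` a continuous homomorphism, and `x₀ ∈ G` with `x₀ ∉ H`.
Assume every `f` in the Hecke algebra `𝓗` vanishes outside `H ∪ H x₀ H`, and that the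
induced representation `U` has a `G`-invariant subspace `W` with `0 < dim W < dim U`.
Set `λ = (dim U - dim W)/dim W`.  Then there is `f ∈ 𝓗` vanishing identically on `H`
and not identically zero (hence supported on `H x₀ H`) such that `f ⋆ φ = λ·φ` for
every `φ ∈ W`, and `f` satisfies the quadratic relation `f ⋆ f = (λ - 1)·f + λ·χ̇`,
i.e. `(Θ(f) - λ)(Θ(f) + 1) = 0` on `U`. -/
theorem hecke_operator_quadratic_relation
    {G : Type*} [Group G] [TopologicalSpace G] [IsTopologicalGroup G]
    [CompactSpace G] [T2Space G] [TotallyDisconnectedSpace G]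
    [MeasurableSpace G] [BorelSpace G]
    (μ : Measure G) [μ.IsHaarMeasure]
    (H : Subgroup G) (hHopen : IsOpen (H : Set G)) (hμH : μ (H : Set G) = 1)
    (χ : H →* ℂˣ) (hχ : Continuous fun h : H => (χ h : ℂ))
    (x₀ : G) (hx₀ : x₀ ∉ H)
    (hsupp : ∀ f ∈ heckeSet H χ, ∀ y : G,
        y ∉ H → ¬(∃ h₁ ∈ H, ∃ h₂ ∈ H, y = h₁ * x₀ * h₂) → f y = 0)
    (W : Submodule ℂ (G → ℂ)) (hWU : W ≤ inducedSubspace H χ)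
    (hWinv : ∀ φ ∈ W, ∀ g : G, (fun x => φ (x * g)) ∈ W)
    (hW0 : 0 < Module.finrank ℂ W)
    (hWU' : Module.finrank ℂ W < Module.finrank ℂ (inducedSubspace H χ))
    (lam : ℂ)
    (hlam : lam = ((Module.finrank ℂ (inducedSubspace H χ) : ℂ) -
        (Module.finrank ℂ W : ℂ)) / (Module.finrank ℂ W : ℂ)) :
    ∃ f ∈ heckeSet H χ,
      (∀ y ∈ H, f y = 0) ∧
      f ≠ 0 ∧
      (∀ φ ∈ W, ∀ y : G, heckeConv μ f φ y = lam * φ y) ∧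
      (∀ y : G, heckeConv μ f f y = (lam - 1) * f y + lam * chiDot H χ y) :=
  hecke_operator_quadratic_relation_general μ H hHopen hμH χ hχ W hWU hWinv hW0 hWU' lam hlam
end
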